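/- arXiv:1601.07767 — 3 statements merged into one kernel-verified Lean document; each statement's English description precedes it below -/
import Mathlib

section
/- Let f(z) = z + a_{k+1} z^{k+1} + ... be a germ of holomorphic diffeomorphism at 0 ∈ ℂ tangent to the identity with a_{k+1} ≠ 0 for some k ≥ 1. Then f is not L-stable. -/
open Filter Topology

noncomputable section

/-- The pseudo-orbit of `p` under a set `S` of maps: all points obtained from `p`
by successively applying elements of `S`. -/
inductive PseudoOrbit (S : Set (ℂ → ℂ)) (p : ℂ) : ℂ → Prop
  | base : PseudoOrbit S p p
  | step {q : ℂ} {f : ℂ → ℂ} : PseudoOrbit S p q → f ∈ S → PseudoOrbit S p (f q)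

/-- A set of germs is `L`-stable if every neighborhood `U` of `0` contains a
sub-neighborhood `V` all of whose pseudo-orbits stay in `U`. -/
def LStableSet (S : Set (ℂ → ℂ)) : Prop :=
  ∀ U ∈ 𝓝 (0:ℂ), ∃ V ∈ 𝓝 (0:ℂ), V ⊆ U ∧ ∀ p ∈ V, ∀ q : ℂ, PseudoOrbit S p q → q ∈ U

/-- A set is closed off the origin if it is closed in some punctured neighborhood of `0`. -/
def ClosedOffOrigin (S : Set ℂ) : Prop :=
  ∃ W ∈ 𝓝 (0:ℂ), closure S ∩ (W \ {0}) ⊆ S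

/-- A germ is analytically linearizable if some local biholomorphism fixing `0`
conjugates it to its linear part `z ↦ f'(0)·z`. -/
def Linearizable (f : ℂ → ℂ) : Prop :=
  ∃ h : ℂ → ℂ, AnalyticAt ℂ h 0 ∧ h 0 = 0 ∧ deriv h 0 ≠ 0 ∧
    ∀ᶠ z in 𝓝 (0:ℂ), h (f z) = deriv f 0 * h z

/-- A germ is non-resonant if its multiplier is `e^{2πiλ}` with `λ` irrational. -/
def NonResonant (f : ℂ → ℂ) : Prop :=
  ∃ l : ℝ, Irrational l ∧ deriv f 0 = Complex.exp (2 * (Real.pi : ℂ) * Complex.I * (l : ℂ))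

/-- A set of germs is finite up to germ equality. -/
def GermFinite (S : Set (ℂ → ℂ)) : Prop :=
  ∃ F : Set (ℂ → ℂ), F.Finite ∧ ∀ f ∈ S, ∃ g ∈ F, f =ᶠ[𝓝 (0:ℂ)] g

/-- A set of germs is cyclic (up to germ equality) if it consists of the iterates of
a single element. -/
def GermCyclic (S : Set (ℂ → ℂ)) : Prop :=
  ∃ g ∈ S, ∀ f ∈ S, ∃ n : ℕ, f =ᶠ[𝓝 (0:ℂ)] g^[n]

/-- A (model of a) subgroup of `Diff(ℂ,0)`: a set of holomorphic germs fixing `0`,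
invertible at `0`, closed under composition and germ-inversion. -/
structure GermGroup where
  carrier : Set (ℂ → ℂ)
  analytic : ∀ f ∈ carrier, AnalyticAt ℂ f 0
  fixes_zero : ∀ f ∈ carrier, f 0 = 0
  deriv_ne : ∀ f ∈ carrier, deriv f 0 ≠ 0
  id_mem : id ∈ carrier
  comp_mem : ∀ f ∈ carrier, ∀ g ∈ carrier, f ∘ g ∈ carrier
  inv_mem : ∀ f ∈ carrier, ∃ g ∈ carrier,
    (∀ᶠ z in 𝓝 (0:ℂ), g (f z) = z) ∧ (∀ᶠ z in 𝓝 (0:ℂ), f (g z) = z)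

/-- A germ group is finitely generated if finitely many of its elements generate every
element (as a germ) by composition. -/
def GermGroup.FinitelyGenerated (G : GermGroup) : Prop :=
  ∃ T : Set (ℂ → ℂ), T.Finite ∧ T ⊆ G.carrier ∧
    ∀ f ∈ G.carrier, ∃ l : List (ℂ → ℂ), (∀ g ∈ l, g ∈ T) ∧
      f =ᶠ[𝓝 (0:ℂ)] l.foldr (· ∘ ·) id

/-! Write `f z = z + z ^ (k + 2) * h z` with `h 0 ≠ 0`; then
`f^[n] z = z + z ^ (k + 2) * H_n z` with `H_n 0 = n * h 0`. If all forward orbits of the disc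
of radius `ρ` stayed in a disc of radius `R` on which `f` is holomorphic, the maximum modulus
principle for `(f^[n] z - z) / z ^ (k + 2)` on the circle of radius `ρ / 2` would give
`n * ‖h 0‖ ≤ (R + ρ / 2) / (ρ / 2) ^ (k + 2)` for every `n`. -/

open Metric Set

theorem PseudoOrbit.iterate {S : Set (ℂ → ℂ)} {f : ℂ → ℂ} (hf : f ∈ S) (p : ℂ) :
    ∀ n : ℕ, PseudoOrbit S p (f^[n] p)
  | 0 => .base
  | n + 1 => by
    rw [Function.iterate_succ_apply']
    exact (PseudoOrbit.iterate hf p n).step hf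

theorem LStableSet.exists_ball_mapsTo_iterate {S : Set (ℂ → ℂ)} (hS : LStableSet S)
    {f : ℂ → ℂ} (hf : f ∈ S) {U : Set ℂ} (hU : U ∈ 𝓝 (0 : ℂ)) :
    ∃ ρ > 0, ∀ n : ℕ, MapsTo f^[n] (ball 0 ρ) U := by
  obtain ⟨V, hV, -, hVU⟩ := hS U hU
  obtain ⟨ρ, hρ, hρV⟩ := Metric.mem_nhds_iff.mp hV
  exact ⟨ρ, hρ, fun n z hz => hVU z (hρV hz) _ (PseudoOrbit.iterate hf z n)⟩

theorem DifferentiableOn.iterate_of_mapsTo {𝕜 E : Type*} [NontriviallyNormedField 𝕜]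
    [NormedAddCommGroup E] [NormedSpace 𝕜 E] {f : E → E} {U V : Set E}
    (hf : DifferentiableOn 𝕜 f U) (hV : ∀ n : ℕ, MapsTo f^[n] V U) :
    ∀ n : ℕ, DifferentiableOn 𝕜 f^[n] V
  | 0 => differentiableOn_id
  | n + 1 => by
    rw [Function.iterate_succ']
    exact hf.comp (hf.iterate_of_mapsTo hV n) (hV n)

section NormalForm

variable {𝕜 : Type*} [NontriviallyNormedField 𝕜]

theorem AnalyticAt.exists_eq_add_pow_mul_of_deriv_eq_one [CharZero 𝕜] [CompleteSpace 𝕜]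
    {f : 𝕜 → 𝕜} (hf : AnalyticAt 𝕜 f 0) (h0 : f 0 = 0) (h1 : deriv f 0 = 1)
    (hne : ¬ f =ᶠ[𝓝 0] id) :
    ∃ (k : ℕ) (h : 𝕜 → 𝕜), AnalyticAt 𝕜 h 0 ∧ h 0 ≠ 0 ∧
      ∀ᶠ z in 𝓝 0, f z = z + z ^ (k + 2) * h z := by
  set φ : 𝕜 → 𝕜 := fun z => f z - z
  have hφ : AnalyticAt 𝕜 φ 0 := hf.sub analyticAt_id
  have hφ_top : analyticOrderAt φ 0 ≠ ⊤ := fun htop =>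
    hne <| (analyticOrderAt_eq_top.mp htop).mono fun z hz => sub_eq_zero.mp hz
  have hφ_two : ((2 : ℕ) : ℕ∞) ≤ analyticOrderAt φ 0 := by
    rw [natCast_le_analyticOrderAt_iff_iteratedDeriv_eq_zero hφ]
    intro i hi
    interval_cases i
    · simp [φ, h0]
    · rw [iteratedDeriv_one,
        (hf.differentiableAt.hasDerivAt.fun_sub (hasDerivAt_id' 0)).deriv, h1, sub_self]
  set m := (analyticOrderAt φ 0).toNat
  have hm : analyticOrderAt φ 0 = m := (ENat.natCast_toNat hφ_top).symm
  obtain ⟨h, hh, hh0, hφh⟩ := hφ.analyticOrderAt_eq_natCast.mp hm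
  have hm2 : 2 ≤ m := by exact_mod_cast hm ▸ hφ_two
  refine ⟨m - 2, h, hh, hh0, hφh.mono fun z hz => ?_⟩
  simp only [φ, sub_zero, smul_eq_mul] at hz
  rw [Nat.sub_add_cancel hm2, ← hz, add_sub_cancel]

/-- The additivity `H 0 = n * h 0` needs the exponent to be at least `2`: with exponent `1` the
multipliers `1 + h 0` would compound instead. -/
theorem exists_iterate_eq_add_pow_mul {f h : 𝕜 → 𝕜} {k : ℕ} (hh : AnalyticAt 𝕜 h 0)
    (hf : ∀ᶠ z in 𝓝 0, f z = z + z ^ (k + 2) * h z) (n : ℕ) :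
    ∃ H : 𝕜 → 𝕜, AnalyticAt 𝕜 H 0 ∧ H 0 = n * h 0 ∧
      ∀ᶠ z in 𝓝 0, f^[n] z = z + z ^ (k + 2) * H z := by
  induction n with
  | zero => exact ⟨fun _ => 0, analyticAt_const, by simp, by simp⟩
  | succ n ih =>
    obtain ⟨H, hH, hH0, hfH⟩ := ih
    have hfn0 : f^[n] 0 = 0 := by simpa using hfH.self_of_nhds
    have hfn : AnalyticAt 𝕜 f^[n] 0 :=
      (analyticAt_id.add ((analyticAt_id.pow _).mul hH)).congr (hfH.mono fun z hz => hz.symm)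
    have hfn_tendsto : Tendsto f^[n] (𝓝 0) (𝓝 0) := by
      simpa [hfn0] using hfn.continuousAt.tendsto
    refine ⟨fun z => H z + (1 + z ^ (k + 1) * H z) ^ (k + 2) * h (f^[n] z), ?_, ?_, ?_⟩
    · exact hH.add (((analyticAt_const.add ((analyticAt_id.pow _).mul hH)).pow _).mul
        ((hfn0 ▸ hh).comp hfn))
    · simp [hH0, hfn0]
      ring
    · filter_upwards [hfH, hfn_tendsto.eventually hf] with z hz hfz
      have hfac : f^[n] z = z * (1 + z ^ (k + 1) * H z) := by rw [hz]; ring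
      rw [Function.iterate_succ_apply', hfz, hfac, mul_pow]
      ring

end NormalForm

theorem norm_le_div_pow_of_eventuallyEq_pow_mul {φ H : ℂ → ℂ} {m : ℕ} {r M : ℝ}
    (hr : 0 < r) (hφ : DiffContOnCl ℂ φ (ball 0 r)) (hH : DifferentiableAt ℂ H 0)
    (hφH : ∀ᶠ z in 𝓝 0, φ z = z ^ m * H z) (hM : ∀ z ∈ sphere 0 r, ‖φ z‖ ≤ M) :
    ‖H 0‖ ≤ M / r ^ m := by
  set F : ℂ → ℂ := Function.update (fun z => φ z / z ^ m) 0 (H 0)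
  have hF0 : F =ᶠ[𝓝 0] H := by
    filter_upwards [hφH] with z hz
    rcases eq_or_ne z 0 with rfl | hz0
    · simp [F]
    · simp [F, hz0, hz]
  have hF : ∀ {z}, z ≠ 0 → F =ᶠ[𝓝 z] fun w => φ w / w ^ m := fun hz =>
    (eventually_ne_nhds hz).mono fun w hw => by simp [F, hw]
  have hFd : DiffContOnCl ℂ F (ball 0 r) := by
    refine .mk_ball (fun z hz => ?_) (fun z hz => ?_)
    · rcases eq_or_ne z 0 with rfl | hz0
      · exact (hH.congr_of_eventuallyEq hF0).differentiableWithinAt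
      · exact (((hφ.differentiableAt isOpen_ball hz).div (differentiableAt_pow m)
          (pow_ne_zero m hz0)).congr_of_eventuallyEq (hF hz0)).differentiableWithinAt
    · rcases eq_or_ne z 0 with rfl | hz0
      · exact (hH.continuousAt.congr hF0.symm).continuousWithinAt
      · have hφz : ContinuousWithinAt (fun w => φ w / w ^ m) (closedBall 0 r) z :=
          (hφ.continuousOn_ball z hz).div (continuous_pow m).continuousWithinAt
            (pow_ne_zero m hz0)
        exact hφz.congr_of_eventuallyEq (eventually_nhdsWithin_of_eventually_nhds (hF hz0))
          (by simp [F, hz0])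
  have hFr : ∀ z ∈ frontier (ball (0 : ℂ) r), ‖F z‖ ≤ M / r ^ m := by
    intro z hz
    rw [frontier_ball 0 hr.ne'] at hz
    have hz0 : z ≠ 0 := ne_of_mem_sphere hz hr.ne'
    rw [mem_sphere_zero_iff_norm] at hz
    simpa [F, hz0, hz] using div_le_div_of_nonneg_right (hM z (by simpa using hz)) (by positivity)
  simpa [F] using Complex.norm_le_of_forall_mem_frontier_norm_le isBounded_ball hFd hFr
    (subset_closure (mem_ball_self hr))

theorem not_forall_mapsTo_iterate_ball {f h : ℂ → ℂ} {k : ℕ} (hh : AnalyticAt ℂ h 0)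
    (hh0 : h 0 ≠ 0) (hf : ∀ᶠ z in 𝓝 0, f z = z + z ^ (k + 2) * h z) {R ρ : ℝ}
    (hfR : DifferentiableOn ℂ f (ball 0 R)) (hρ : 0 < ρ) :
    ¬ ∀ n : ℕ, MapsTo f^[n] (ball 0 ρ) (ball 0 R) := by
  intro hmaps
  set s := ρ / 2
  have hs : 0 < s := by positivity
  have hsρ : s < ρ := half_lt_self hρ
  have hbound : ∀ n : ℕ, n * ‖h 0‖ ≤ (R + s) / s ^ (k + 2) := by
    intro n
    obtain ⟨H, hH, hH0, hfH⟩ := exists_iterate_eq_add_pow_mul hh hf n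
    have hd : DiffContOnCl ℂ (fun z => f^[n] z - z) (ball 0 s) :=
      ((hfR.iterate_of_mapsTo hmaps n).sub differentiableOn_id).diffContOnCl_ball
        (closedBall_subset_ball hsρ)
    have hM : ∀ z ∈ sphere (0 : ℂ) s, ‖f^[n] z - z‖ ≤ R + s := fun z hz => by
      have hzR : ‖f^[n] z‖ < R :=
        mem_ball_zero_iff.mp (hmaps n (sphere_subset_ball hsρ hz))
      linarith [norm_sub_le (f^[n] z) z, mem_sphere_zero_iff_norm.mp hz]
    simpa [hH0] using norm_le_div_pow_of_eventuallyEq_pow_mul hs hd hH.differentiableAt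
      (hfH.mono fun z hz => by rw [hz]; ring) hM
  obtain ⟨n, hn⟩ := exists_nat_gt ((R + s) / s ^ (k + 2) / ‖h 0‖)
  rw [div_lt_iff₀ (norm_pos_iff.mpr hh0)] at hn
  linarith [hbound n]

theorem tangent_to_identity_not_LStable_general (f g : ℂ → ℂ)
    (hf : AnalyticAt ℂ f 0) (h0 : f 0 = 0) (h1 : deriv f 0 = 1)
    (hne : ¬ f =ᶠ[𝓝 (0:ℂ)] id) :
    ¬ LStableSet {f, g} := by
  intro hL
  obtain ⟨k, h, hh, hh0, hfh⟩ := hf.exists_eq_add_pow_mul_of_deriv_eq_one h0 h1 hne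
  obtain ⟨R, hR, hfR⟩ := hf.exists_ball_analyticOnNhd
  obtain ⟨ρ, hρ, hmaps⟩ := hL.exists_ball_mapsTo_iterate (mem_insert f _) (ball_mem_nhds 0 hR)
  exact not_forall_mapsTo_iterate_ball hh hh0 hfh hfR.differentiableOn hρ hmaps

/-- a nontrivial germ tangent to the identity
(`f(z) = z + a_{k+1}z^{k+1} + ⋯`, `a_{k+1} ≠ 0`) is not `L`-stable
(for the cyclic group generated by `f` and a germ inverse `g`). -/
theorem tangent_to_identity_not_LStable (f g : ℂ → ℂ)
    (hf : AnalyticAt ℂ f 0) (h0 : f 0 = 0) (h1 : deriv f 0 = 1)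
    (hne : ¬ f =ᶠ[𝓝 (0:ℂ)] id)
    (hg : ∀ᶠ z in 𝓝 (0:ℂ), g (f z) = z ∧ f (g z) = z) :
    ¬ LStableSet {f, g} :=
  tangent_to_identity_not_LStable_general f g hf h0 h1 hne
end
end

section
/- Let G ⊆ Diff(ℂ,0) be a group of germs all of whose elements are periodic and which is abelian. Then G is isomorphic to a subgroup of the group of roots of unity; in particular, if G is finitely generated then G is finite cyclic. -/
open Filter Topology

noncomputable section

/-!
A periodic germ tangent to the identity is the identity: the average of its iterates is a local
coordinate in which it acts trivially. So if `f'(0) = g'(0)` then `g⁻¹ ∘ f = id`, i.e. a germ of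
the group is determined by its multiplier, which is a root of unity. In a finitely generated group
all multipliers are `N`-th roots of unity for `N` the product of the orders of the generators'
multipliers, so the group is finite, and it is cyclic as a finite subgroup of `ℂˣ`.
-/

open Function Set

section TangentToIdentity

variable {𝕜 : Type*} [NontriviallyNormedField 𝕜] [CompleteSpace 𝕜] [CharZero 𝕜]

/-- The average `h = ∑_{j<m} f^[j]` satisfies `h ∘ f = h` near `0` and `h'(0) = m ≠ 0`, so `h` is
a local coordinate in which `f` is the identity. -/
theorem eventuallyEq_id_of_iterate_eventuallyEq_id {f : 𝕜 → 𝕜} (hf : HasStrictDerivAt f 1 0)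
    (hf0 : f 0 = 0) {m : ℕ} (hm : 0 < m) (hper : f^[m] =ᶠ[𝓝 0] id) : f =ᶠ[𝓝 0] id := by
  set h : 𝕜 → 𝕜 := fun z => ∑ j ∈ Finset.range m, f^[j] z
  have hh : HasStrictDerivAt h (m : 𝕜) 0 := by
    simpa using HasStrictDerivAt.fun_sum (u := Finset.range m) fun j _ => hf.iterate _ hf0 j
  have hm' : (m : 𝕜) ≠ 0 := Nat.cast_ne_zero.mpr hm.ne'
  have h_comp : ∀ᶠ z in 𝓝 0, h (f z) = h z := by
    filter_upwards [hper] with z hz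
    have telescope := Finset.sum_range_succ' (fun j => f^[j] z) m
    rw [Finset.sum_range_succ, hz, id, iterate_zero_apply] at telescope
    simp only [h, ← iterate_succ_apply]
    linear_combination -telescope
  have hf_tendsto : Tendsto f (𝓝 0) (𝓝 0) := by
    simpa [hf0] using hf.hasDerivAt.continuousAt.tendsto
  filter_upwards [hh.eventually_left_inverse hm',
    hf_tendsto.eventually (hh.eventually_left_inverse hm'), h_comp] with z hz hfz hcomp
  rw [id, ← hfz, hcomp, hz]

end TangentToIdentity

theorem germFinite_of_finite_image_deriv {S : Set (ℂ → ℂ)}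
    (hinj : ∀ f ∈ S, ∀ g ∈ S, deriv f 0 = deriv g 0 → f =ᶠ[𝓝 0] g)
    (hfin : ((fun f => deriv f 0) '' S).Finite) : GermFinite S := by
  refine ⟨invFunOn (fun f => deriv f 0) S '' ((fun f => deriv f 0) '' S), hfin.image _,
    fun f hf => ⟨_, mem_image_of_mem _ (mem_image_of_mem _ hf), hinj f hf _ ?_ ?_⟩⟩
  · exact invFunOn_mem ⟨f, hf, rfl⟩
  · exact (invFunOn_eq (f := fun f => deriv f 0) ⟨f, hf, rfl⟩).symm

theorem finite_image_deriv_of_pow_eq_one {S : Set (ℂ → ℂ)} {N : ℕ} (hN : 0 < N)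
    (hpow : ∀ f ∈ S, deriv f 0 ^ N = 1) : ((fun f => deriv f 0) '' S).Finite :=
  (Polynomial.nthRootsFinset N (1 : ℂ)).finite_toSet.subset <| by
    rintro _ ⟨f, hf, rfl⟩
    exact (Polynomial.mem_nthRootsFinset hN 1).mpr (hpow f hf)

namespace GermGroup

variable (G : GermGroup) {f g k : ℂ → ℂ}

theorem hasStrictDerivAt (hf : f ∈ G.carrier) : HasStrictDerivAt f (deriv f 0) 0 :=
  (G.analytic f hf).hasStrictDerivAt

theorem tendsto_zero (hf : f ∈ G.carrier) : Tendsto f (𝓝 0) (𝓝 0) := by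
  simpa [G.fixes_zero f hf] using (G.analytic f hf).continuousAt.tendsto

theorem deriv_comp (hf : f ∈ G.carrier) (hg : g ∈ G.carrier) :
    deriv (f ∘ g) 0 = deriv f 0 * deriv g 0 := by
  have hf' : HasDerivAt f (deriv f 0) (g 0) := by
    rw [G.fixes_zero g hg]; exact (G.hasStrictDerivAt hf).hasDerivAt
  exact (hf'.comp 0 (G.hasStrictDerivAt hg).hasDerivAt).deriv

theorem deriv_mul_deriv_eq_one (hk : k ∈ G.carrier) (hg : g ∈ G.carrier)
    (hkg : ∀ᶠ z in 𝓝 0, k (g z) = z) : deriv k 0 * deriv g 0 = 1 := by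
  rw [← G.deriv_comp hk hg, (show k ∘ g =ᶠ[𝓝 0] id from hkg).deriv_eq, deriv_id]

theorem iterate_mem (hf : f ∈ G.carrier) (n : ℕ) : f^[n] ∈ G.carrier := by
  induction n with
  | zero => exact G.id_mem
  | succ n ih => rw [iterate_succ']; exact G.comp_mem f hf _ ih

theorem deriv_iterate (hf : f ∈ G.carrier) (n : ℕ) : deriv f^[n] 0 = deriv f 0 ^ n :=
  ((G.hasStrictDerivAt hf).hasDerivAt.iterate _ (G.fixes_zero f hf) n).deriv

theorem foldr_comp_mem {l : List (ℂ → ℂ)} (hl : ∀ g ∈ l, g ∈ G.carrier) :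
    l.foldr (· ∘ ·) id ∈ G.carrier := by
  induction l with
  | nil => exact G.id_mem
  | cons g l ih =>
    exact G.comp_mem g (hl g List.mem_cons_self) _
      (ih fun x hx => hl x (List.mem_cons_of_mem g hx))

theorem deriv_foldr_comp_pow_eq_one {l : List (ℂ → ℂ)} {N : ℕ}
    (hl : ∀ g ∈ l, g ∈ G.carrier ∧ deriv g 0 ^ N = 1) :
    deriv (l.foldr (· ∘ ·) id) 0 ^ N = 1 := by
  induction l with
  | nil => simp
  | cons g l ih =>
    obtain ⟨hg, hgN⟩ := hl g List.mem_cons_self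
    have hl' := fun x hx => hl x (List.mem_cons_of_mem g hx)
    rw [List.foldr_cons, G.deriv_comp hg (G.foldr_comp_mem fun x hx => (hl' x hx).1), mul_pow,
      hgN, ih hl', one_mul]

def multipliers : Subgroup ℂˣ where
  carrier := {u | ∃ f ∈ G.carrier, deriv f 0 = u}
  one_mem' := ⟨id, G.id_mem, by simp⟩
  mul_mem' := by
    rintro u v ⟨f, hf, hfu⟩ ⟨g, hg, hgv⟩
    exact ⟨f ∘ g, G.comp_mem f hf g hg, by rw [G.deriv_comp hf hg, hfu, hgv, Units.val_mul]⟩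
  inv_mem' := by
    rintro u ⟨g, hg, hgu⟩
    obtain ⟨k, hk, hkg, -⟩ := G.inv_mem g hg
    refine ⟨k, hk, ?_⟩
    rw [Units.val_inv_eq_inv_val, ← hgu]
    exact eq_inv_of_mul_eq_one_left (G.deriv_mul_deriv_eq_one hk hg hkg)

def IsPeriodic : Prop :=
  ∀ f ∈ G.carrier, ∃ m : ℕ, 0 < m ∧ f^[m] =ᶠ[𝓝 (0:ℂ)] id

variable {G}

theorem IsPeriodic.isOfFinOrder_deriv (hG : G.IsPeriodic) (hf : f ∈ G.carrier) :
    IsOfFinOrder (deriv f 0) := by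
  obtain ⟨m, hm, hfm⟩ := hG f hf
  refine isOfFinOrder_iff_pow_eq_one.mpr ⟨m, hm, ?_⟩
  rw [← G.deriv_iterate hf, hfm.deriv_eq, deriv_id]

/-- For an inverse `k` of `g`, the germ `k ∘ f` is periodic and tangent to the identity. -/
theorem IsPeriodic.eventuallyEq_of_deriv_eq (hG : G.IsPeriodic) (hf : f ∈ G.carrier)
    (hg : g ∈ G.carrier) (hfg : deriv f 0 = deriv g 0) : f =ᶠ[𝓝 0] g := by
  obtain ⟨k, hk, hkg, hgk⟩ := G.inv_mem g hg
  have hkf : k ∘ f ∈ G.carrier := G.comp_mem k hk f hf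
  obtain ⟨m, hm, hkf_per⟩ := hG _ hkf
  have hkf_id : k ∘ f =ᶠ[𝓝 0] id := by
    refine eventuallyEq_id_of_iterate_eventuallyEq_id ?_ (G.fixes_zero _ hkf) hm hkf_per
    have := G.hasStrictDerivAt hkf
    rwa [G.deriv_comp hk hf, hfg, G.deriv_mul_deriv_eq_one hk hg hkg] at this
  filter_upwards [hkf_id, (G.tendsto_zero hf).eventually hgk] with z hz hgkf
  rw [← hgkf]
  exact congrArg g hz

theorem FinitelyGenerated.exists_pow_deriv_eq_one (hfg : G.FinitelyGenerated)
    (hG : G.IsPeriodic) : ∃ N, 0 < N ∧ ∀ f ∈ G.carrier, deriv f 0 ^ N = 1 := by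
  obtain ⟨T, hT, hTG, hgen⟩ := hfg
  set N := ∏ t ∈ hT.toFinset, orderOf (deriv t 0)
  have hT_pow : ∀ t ∈ T, deriv t 0 ^ N = 1 := fun t ht =>
    orderOf_dvd_iff_pow_eq_one.mp (Finset.dvd_prod_of_mem _ (hT.mem_toFinset.mpr ht))
  refine ⟨N, Finset.prod_pos fun t ht =>
    (hG.isOfFinOrder_deriv (hTG (hT.mem_toFinset.mp ht))).orderOf_pos, fun f hf => ?_⟩
  obtain ⟨l, hl, hfl⟩ := hgen f hf
  rw [hfl.deriv_eq]
  exact G.deriv_foldr_comp_pow_eq_one fun g hg => ⟨hTG (hl g hg), hT_pow g (hl g hg)⟩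

theorem finite_multipliers_of_pow_eq_one {N : ℕ} [NeZero N]
    (hpow : ∀ f ∈ G.carrier, deriv f 0 ^ N = 1) : Finite G.multipliers := by
  have hle : G.multipliers ≤ rootsOfUnity N ℂ := by
    rintro _ ⟨f, hf, hfu⟩
    rw [mem_rootsOfUnity', ← hfu]
    exact hpow f hf
  exact Finite.of_injective _ (Subgroup.inclusion_injective hle)

theorem IsPeriodic.germCyclic [Finite G.multipliers] (hG : G.IsPeriodic) :
    GermCyclic G.carrier := by
  obtain ⟨u, hu⟩ := IsCyclic.exists_generator (α := G.multipliers)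
  obtain ⟨g, hg, hgu⟩ := u.2
  refine ⟨g, hg, fun f hf => ?_⟩
  obtain ⟨n, hn⟩ :=
    mem_powers_iff_mem_zpowers.mpr (hu ⟨Units.mk0 _ (G.deriv_ne f hf), f, hf, rfl⟩)
  refine ⟨n, hG.eventuallyEq_of_deriv_eq hf (G.iterate_mem hg n) ?_⟩
  rw [G.deriv_iterate hg, hgu]
  exact congrArg (fun v : G.multipliers => ((v : ℂˣ) : ℂ)) hn.symm

end GermGroup

theorem abelian_periodic_group_embeds_in_roots_of_unity_general (G : GermGroup)
    (hper : ∀ f ∈ G.carrier, ∃ m : ℕ, 0 < m ∧ f^[m] =ᶠ[𝓝 (0:ℂ)] id) :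
    ((∀ f ∈ G.carrier, ∃ n : ℕ, 0 < n ∧ (deriv f 0) ^ n = 1) ∧
     (∀ f ∈ G.carrier, ∀ g ∈ G.carrier, deriv f 0 = deriv g 0 → f =ᶠ[𝓝 (0:ℂ)] g)) ∧
    (G.FinitelyGenerated → GermFinite G.carrier ∧ GermCyclic G.carrier) := by
  have hG : G.IsPeriodic := hper
  have hinj : ∀ f ∈ G.carrier, ∀ g ∈ G.carrier, deriv f 0 = deriv g 0 → f =ᶠ[𝓝 (0:ℂ)] g :=
    fun f hf g hg => hG.eventuallyEq_of_deriv_eq hf hg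
  refine ⟨⟨fun f hf => isOfFinOrder_iff_pow_eq_one.mp (hG.isOfFinOrder_deriv hf), hinj⟩,
    fun hfg => ?_⟩
  obtain ⟨N, hN, hpow⟩ := hfg.exists_pow_deriv_eq_one hG
  have : NeZero N := ⟨hN.ne'⟩
  have : Finite G.multipliers := GermGroup.finite_multipliers_of_pow_eq_one hpow
  exact ⟨germFinite_of_finite_image_deriv hinj (finite_image_deriv_of_pow_eq_one hN hpow),
    hG.germCyclic⟩

/-- an abelian group of periodic germs in `Diff(ℂ,0)` embeds, via the
derivative homomorphism `f ↦ f'(0)`, into the group of roots of unity (the multiplier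
is a root of unity and determines the element); in particular a finitely generated such
group is finite cyclic. -/
theorem abelian_periodic_group_embeds_in_roots_of_unity (G : GermGroup)
    (hper : ∀ f ∈ G.carrier, ∃ m : ℕ, 0 < m ∧ f^[m] =ᶠ[𝓝 (0:ℂ)] id)
    (hab : ∀ f ∈ G.carrier, ∀ g ∈ G.carrier, f ∘ g =ᶠ[𝓝 (0:ℂ)] g ∘ f) :
    ((∀ f ∈ G.carrier, ∃ n : ℕ, 0 < n ∧ (deriv f 0) ^ n = 1) ∧
     (∀ f ∈ G.carrier, ∀ g ∈ G.carrier, deriv f 0 = deriv g 0 → f =ᶠ[𝓝 (0:ℂ)] g)) ∧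
    (G.FinitelyGenerated → GermFinite G.carrier ∧ GermCyclic G.carrier) :=
  abelian_periodic_group_embeds_in_roots_of_unity_general G hper
end
end

section
/- Let g: V → ℂ be a holomorphic function on a neighborhood V of 0 ∈ ℂ with g(0) = 0 and g not identically 0. Then the invariance group Inv(g) = { f ∈ Diff(ℂ,0) : g ∘ f = g } is a finite cyclic group. -/
open Filter Topology

noncomputable section

/-- The invariance group of a holomorphic germ `g`: all germs of holomorphic
diffeomorphisms `f` fixing `0` with `g ∘ f = g` as germs at `0`. -/
def InvGroup (g : ℂ → ℂ) : Set (ℂ → ℂ) :=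
  {f | AnalyticAt ℂ f 0 ∧ f 0 = 0 ∧ deriv f 0 ≠ 0 ∧ g ∘ f =ᶠ[𝓝 (0:ℂ)] g}

/-!
Write `g = z ^ k * u` with `u 0 ≠ 0` and take an analytic `k`-th root of `u`: then `g = φ ^ k`
for a local coordinate `φ`. If `g ∘ f = g`, then `(φ ∘ f) ^ k = φ ^ k`; factoring `X ^ k - Y ^ k`
over the `k`-th roots of unity, the identity theorem leaves a single factor, `φ ∘ f = ζ * φ`, and
differentiating gives `ζ = f'(0)`. So the multiplier `f ↦ f'(0)` is a multiplicative map from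
`Inv(g)` to the `k`-th roots of unity, injective on germs because `φ` is locally invertible. Its
image is a finite subgroup of `ℂˣ`, hence cyclic, and a germ whose multiplier generates it
generates `Inv(g)`.
-/

theorem AnalyticAt.exists_eventually_eq_zero_of_prod {𝕜 ι : Type*} [NontriviallyNormedField 𝕜]
    {s : Finset ι} {F : ι → 𝕜 → 𝕜} {x : 𝕜} (hF : ∀ i ∈ s, AnalyticAt 𝕜 (F i) x)
    (h : ∀ᶠ z in 𝓝 x, ∏ i ∈ s, F i z = 0) : ∃ i ∈ s, ∀ᶠ z in 𝓝 x, F i z = 0 := by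
  by_contra hne
  simp only [not_exists, not_and] at hne
  have hF_ne : ∀ i ∈ s, ∀ᶠ z in 𝓝[≠] x, F i z ≠ 0 := fun i hi =>
    ((hF i hi).eventually_eq_zero_or_eventually_ne_zero).resolve_left (hne i hi)
  have hprod_ne : ∀ᶠ z in 𝓝[≠] x, ∏ i ∈ s, F i z ≠ 0 := by
    filter_upwards [(Filter.eventually_all_finset s).2 hF_ne] with z hz
    exact Finset.prod_ne_zero_iff.2 hz
  exact (hprod_ne.and (h.filter_mono nhdsWithin_le_nhds)).exists.elim fun z hz => hz.1 hz.2

theorem AnalyticAt.exists_eventuallyEq_mul_of_pow_eventuallyEq {ψ φ : ℂ → ℂ} {x : ℂ} {k : ℕ}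
    (hk : k ≠ 0) (hψ : AnalyticAt ℂ ψ x) (hφ : AnalyticAt ℂ φ x)
    (h : ψ ^ k =ᶠ[𝓝 x] φ ^ k) : ∃ ζ : ℂ, ζ ^ k = 1 ∧ ψ =ᶠ[𝓝 x] fun z => ζ * φ z := by
  have hfactor (z : ℂ) :
      ψ z ^ k - φ z ^ k = ∏ ζ ∈ Polynomial.nthRootsFinset k (1 : ℂ), (ψ z - ζ * φ z) :=
    (Complex.isPrimitiveRoot_exp k hk).pow_sub_pow_eq_prod_sub_mul _ _ (Nat.pos_of_ne_zero hk)
  obtain ⟨ζ, hζ, hζφ⟩ := exists_eventually_eq_zero_of_prod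
    (s := Polynomial.nthRootsFinset k (1 : ℂ)) (F := fun ζ z => ψ z - ζ * φ z)
    (fun ζ _ => hψ.sub (analyticAt_const.mul hφ))
    (h.mono fun z hz => by rw [← hfactor]; simpa [sub_eq_zero] using hz)
  exact ⟨ζ, (Polynomial.mem_nthRootsFinset (Nat.pos_of_ne_zero hk) 1).1 hζ,
    hζφ.mono fun z hz => sub_eq_zero.1 hz⟩

theorem AnalyticAt.exists_analyticAt_pow_eq {u : ℂ → ℂ} {x : ℂ} (hu : AnalyticAt ℂ u x)
    (hux : u x ≠ 0) {k : ℕ} (hk : k ≠ 0) : ∃ v : ℂ → ℂ, AnalyticAt ℂ v x ∧ ∀ z, v z ^ k = u z := by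
  obtain ⟨c, hc⟩ := IsAlgClosed.exists_pow_nat_eq (u x) (Nat.pos_of_ne_zero hk)
  -- dividing by `u x` keeps the base near `1`, where the principal branch of `· ^ k⁻¹` is analytic
  refine ⟨fun z => c * (u z / u x) ^ (k⁻¹ : ℂ), analyticAt_const.mul ?_, fun z => ?_⟩
  · refine hu.div_const.cpow analyticAt_const ?_
    simp [div_self hux]
  · rw [mul_pow, Complex.cpow_nat_inv_pow _ hk, hc, mul_div_cancel₀ _ hux]

theorem AnalyticAt.exists_eventuallyEq_pow_of_apply_eq_zero {g : ℂ → ℂ} {x : ℂ}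
    (hg : AnalyticAt ℂ g x) (hgx : g x = 0) (hne : ¬ g =ᶠ[𝓝 x] fun _ => 0) :
    ∃ k ≠ 0, ∃ φ : ℂ → ℂ, AnalyticAt ℂ φ x ∧ deriv φ x ≠ 0 ∧ g =ᶠ[𝓝 x] φ ^ k := by
  obtain ⟨k, hk⟩ := ENat.ne_top_iff_exists.1 (mt analyticOrderAt_eq_top.1 hne)
  obtain ⟨u, hu, hux, hgu⟩ := hg.analyticOrderAt_eq_natCast.1 hk.symm
  have hk0 : k ≠ 0 := by
    rintro rfl
    exact hux (by simpa [hgx] using hgu.self_of_nhds.symm)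
  obtain ⟨v, hv, hvu⟩ := hu.exists_analyticAt_pow_eq hux hk0
  have hφ : HasDerivAt (fun z => (z - x) * v z) (v x) x := by
    simpa using ((hasDerivAt_id x).sub_const x).fun_mul hv.differentiableAt.hasDerivAt
  refine ⟨k, hk0, fun z => (z - x) * v z, (analyticAt_id.sub analyticAt_const).mul hv, ?_, ?_⟩
  · rw [hφ.deriv]
    exact fun hvx => hux (by rw [← hvu, hvx, zero_pow hk0])
  · filter_upwards [hgu] with z hz
    simp [hz, mul_pow, hvu]

theorem comp_eventuallyEq_deriv_mul_of_pow_eventuallyEq {φ f : ℂ → ℂ} {x : ℂ} {k : ℕ}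
    (hk : k ≠ 0) (hφ : AnalyticAt ℂ φ x) (hφ' : deriv φ x ≠ 0) (hf : AnalyticAt ℂ f x)
    (hfx : f x = x) (h : (φ ∘ f) ^ k =ᶠ[𝓝 x] φ ^ k) :
    deriv f x ^ k = 1 ∧ φ ∘ f =ᶠ[𝓝 x] fun z => deriv f x * φ z := by
  have hφf : AnalyticAt ℂ φ (f x) := by rwa [hfx]
  obtain ⟨ζ, hζ, hφζ⟩ := (hφf.comp hf).exists_eventuallyEq_mul_of_pow_eventuallyEq hk hφ h
  have hφ_at : HasDerivAt φ (deriv φ x) (f x) := by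
    rw [hfx]
    exact hφ.differentiableAt.hasDerivAt
  have hchain : HasDerivAt (φ ∘ f) (deriv φ x * deriv f x) x :=
    hφ_at.comp x hf.differentiableAt.hasDerivAt
  have hζ_eq : ζ = deriv f x := by
    have := (hchain.congr_of_eventuallyEq hφζ.symm).unique
      (hφ.differentiableAt.hasDerivAt.const_mul ζ)
    exact (mul_left_cancel₀ hφ' (this.trans (mul_comm _ _))).symm
  exact hζ_eq ▸ ⟨hζ, hφζ⟩

theorem HasStrictDerivAt.eventuallyEq_of_comp_eventuallyEq {𝕜 α : Type*}
    [NontriviallyNormedField 𝕜] [CompleteSpace 𝕜] {φ : 𝕜 → 𝕜} {φ' a : 𝕜} {l : Filter α}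
    {f r : α → 𝕜} (hφ : HasStrictDerivAt φ φ' a) (hφ' : φ' ≠ 0) (hf : Tendsto f l (𝓝 a))
    (hr : Tendsto r l (𝓝 a)) (h : φ ∘ f =ᶠ[l] φ ∘ r) : f =ᶠ[l] r := by
  have hinv := hφ.eventually_left_inverse hφ'
  filter_upwards [hf.eventually hinv, hr.eventually hinv, h] with z hfz hrz hz
  rw [← hfz, ← hrz]
  exact congrArg _ hz

theorem MonoidHom.exists_forall_exists_lt_eq_pow {M K : Type*} [Monoid M] [CommRing K]
    [IsDomain K] (μ : M →* K) {k : ℕ} (hk : k ≠ 0) (hμ : ∀ m, μ m ^ k = 1) :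
    ∃ m₀, ∀ m, ∃ n < k, μ m = μ m₀ ^ n := by
  have : NeZero k := ⟨hk⟩
  let ν : M →* Kˣ := IsUnit.liftRight μ fun m => IsUnit.of_pow_eq_one (hμ m) hk
  have hν (m : M) : ν m ^ k = 1 := Units.ext <| by
    rw [Units.val_pow_eq_pow_val, IsUnit.coe_liftRight, hμ m, Units.val_one]
  let H : Subgroup Kˣ :=
    { MonoidHom.mrange ν with
      inv_mem' := by
        rintro _ ⟨m, rfl⟩
        refine ⟨m ^ (k - 1), ?_⟩
        rw [map_pow]
        exact eq_inv_of_mul_eq_one_left (by rw [pow_sub_one_mul hk, hν]) }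
  have hH : H ≤ rootsOfUnity k K := by
    rintro _ ⟨m, rfl⟩
    exact (mem_rootsOfUnity k _).2 (hν m)
  have : Finite H := Finite.of_injective _ (Subgroup.inclusion_injective hH)
  obtain ⟨⟨_, m₀, rfl⟩, hgen⟩ := IsCyclic.exists_monoid_generator (α := H)
  refine ⟨m₀, fun m => ?_⟩
  obtain ⟨n, hn⟩ := hgen ⟨ν m, m, rfl⟩
  have hn' : μ m = μ m₀ ^ n := by
    have := congrArg (fun x : H => ((x : Kˣ) : K)) hn.symm
    simpa only [SubmonoidClass.coe_pow, Units.val_pow_eq_pow_val, ν, IsUnit.coe_liftRight]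
      using this
  exact ⟨n % k, Nat.mod_lt n (Nat.pos_of_ne_zero hk), hn'.trans (pow_eq_pow_mod n (hμ m₀))⟩

theorem id_mem_invGroup (g : ℂ → ℂ) : id ∈ InvGroup g :=
  ⟨analyticAt_id, rfl, by simp, by rw [Function.comp_id]⟩

theorem tendsto_of_mem_invGroup {g f : ℂ → ℂ} (hf : f ∈ InvGroup g) :
    Tendsto f (𝓝 0) (𝓝 0) := by
  simpa only [hf.2.1] using hf.1.continuousAt.tendsto

theorem deriv_comp_of_mem_invGroup {g f r : ℂ → ℂ} (hf : f ∈ InvGroup g) (hr : r ∈ InvGroup g) :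
    deriv (f ∘ r) 0 = deriv f 0 * deriv r 0 := by
  have hf_at : DifferentiableAt ℂ f (r 0) := by
    rw [hr.2.1]
    exact hf.1.differentiableAt
  rw [deriv_comp 0 hf_at hr.1.differentiableAt, hr.2.1]

theorem comp_mem_invGroup {g f r : ℂ → ℂ} (hf : f ∈ InvGroup g) (hr : r ∈ InvGroup g) :
    f ∘ r ∈ InvGroup g := by
  obtain ⟨hfa, hf0, hfd, hfg⟩ := hf
  refine ⟨(hr.2.1 ▸ hfa).comp hr.1, by simp [hr.2.1, hf0], ?_, ?_⟩
  · rw [deriv_comp_of_mem_invGroup ⟨hfa, hf0, hfd, hfg⟩ hr]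
    exact mul_ne_zero hfd hr.2.2.1
  · exact (hfg.comp_tendsto (tendsto_of_mem_invGroup hr)).trans hr.2.2.2

/-- `Inv(g)` as a monoid under composition, so that `f ^ n` is the iterate `f^[n]`. -/
def invGroupSubmonoid (g : ℂ → ℂ) : Submonoid (Function.End ℂ) where
  carrier := InvGroup g
  one_mem' := id_mem_invGroup g
  mul_mem' := comp_mem_invGroup

def invGroupMultiplier (g : ℂ → ℂ) : invGroupSubmonoid g →* ℂ where
  toFun f := deriv (f.1 : ℂ → ℂ) 0
  map_one' := deriv_id 0
  map_mul' f r := deriv_comp_of_mem_invGroup f.2 r.2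

/-- for a holomorphic `g` with `g(0) = 0` and `g ≢ 0` near `0`, the
invariance group `Inv(g) = {f : g ∘ f = g}` is a finite cyclic group. -/
theorem invariance_group_finite_cyclic (g : ℂ → ℂ)
    (hg : AnalyticAt ℂ g 0) (h0 : g 0 = 0)
    (hne : ¬ g =ᶠ[𝓝 (0:ℂ)] (fun _ => 0)) :
    GermFinite (InvGroup g) ∧ GermCyclic (InvGroup g) := by
  obtain ⟨k, hk, φ, hφ, hφ', hgφ⟩ := hg.exists_eventuallyEq_pow_of_apply_eq_zero h0 hne
  have hlin : ∀ f ∈ InvGroup g, deriv f 0 ^ k = 1 ∧ φ ∘ f =ᶠ[𝓝 0] fun z => deriv f 0 * φ z :=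
    fun f hf => comp_eventuallyEq_deriv_mul_of_pow_eventuallyEq hk hφ hφ' hf.1 hf.2.1
      (((hgφ.comp_tendsto (tendsto_of_mem_invGroup hf)).symm.trans hf.2.2.2).trans hgφ)
  have hdet : ∀ f ∈ InvGroup g, ∀ r ∈ InvGroup g, deriv f 0 = deriv r 0 → f =ᶠ[𝓝 0] r :=
    fun f hf r hr hfr => hφ.hasStrictDerivAt.eventuallyEq_of_comp_eventuallyEq hφ'
      (tendsto_of_mem_invGroup hf) (tendsto_of_mem_invGroup hr)
      (((hlin f hf).2.trans (by rw [hfr])).trans (hlin r hr).2.symm)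
  obtain ⟨f₀, hf₀⟩ :=
    (invGroupMultiplier g).exists_forall_exists_lt_eq_pow hk fun f => (hlin f.1 f.2).1
  have hiter : ∀ f ∈ InvGroup g, ∃ n < k, f =ᶠ[𝓝 0] f₀.1^[n] := fun f hf =>
    let ⟨n, hnk, hn⟩ := hf₀ ⟨f, hf⟩
    ⟨n, hnk, hdet f hf _ (f₀ ^ n).2 (hn.trans (map_pow _ _ _).symm)⟩
  refine ⟨⟨(f₀.1^[·]) '' Set.Iio k, (Set.finite_Iio k).image _, fun f hf => ?_⟩,
    ⟨f₀.1, f₀.2, fun f hf => ?_⟩⟩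
  · obtain ⟨n, hnk, hn⟩ := hiter f hf
    exact ⟨_, ⟨n, hnk, rfl⟩, hn⟩
  · obtain ⟨n, -, hn⟩ := hiter f hf
    exact ⟨n, hn⟩
end
end
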